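/- arXiv:1510.09207 — 3 statements merged into one kernel-verified Lean document; each statement's English description precedes it below -/
import Mathlib

section
/- For any vector μ = (μ_1, …, μ_m) in ℝ^m, the total variation distance between G(μ, I_m) and G(0, I_m) is at most (|μ_1| + … + |μ_m|) / √(2π). -/
/-!
For probability measures with densities `p, q`, every difference `P A - Q A` is at most half the
L¹ distance `∫ |p - q|`. The densities of `G(μ, I_m)` and `G(0, I_m)` are products of
one-dimensional Gaussian densities; changing one coordinate at a time telescopes their L¹ distance
into a sum of one-dimensional ones. In dimension one the densities of `N(a, 1)` and `N(0, 1)` cross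
at `a / 2`, so their L¹ distance is twice the standard Gaussian mass of `(-|a|/2, |a|/2]`, which is
at most `2 |a| / √(2π)` because the standard density never exceeds `1 / √(2π)`.
-/

open MeasureTheory Matrix Filter

/-- Density of the multivariate Gaussian with mean `μ` and covariance `Σ`. -/
noncomputable def gaussianDensity {m : ℕ} (μ : EuclideanSpace ℝ (Fin m))
    (S : Matrix (Fin m) (Fin m) ℝ) (x : EuclideanSpace ℝ (Fin m)) : ℝ :=
  (Real.sqrt ((2 * Real.pi) ^ m * S.det))⁻¹ *
    Real.exp (-(1 / 2) * ((fun i => x i - μ i) ⬝ᵥ (S⁻¹ *ᵥ fun i => x i - μ i)))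

/-- The multivariate Gaussian measure `G(μ, Σ)` on `ℝ^m`. -/
noncomputable def gaussian {m : ℕ} (μ : EuclideanSpace ℝ (Fin m))
    (S : Matrix (Fin m) (Fin m) ℝ) : Measure (EuclideanSpace ℝ (Fin m)) :=
  volume.withDensity fun x => ENNReal.ofReal (gaussianDensity μ S x)

/-- Total variation distance: `sup_A |P(A) - Q(A)|`. -/
noncomputable def tvDist {Ω : Type*} [MeasurableSpace Ω] (P Q : Measure Ω) : ℝ :=
  ⨆ A ∈ {s : Set Ω | MeasurableSet s}, |(P A).toReal - (Q A).toReal|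

open ProbabilityTheory Real Set Finset
open scoped NNReal

section SignedDensity

variable {Ω : Type*} [MeasurableSpace Ω] {μ : Measure Ω} {f : Ω → ℝ}

-- `(|f| + f) / 2` is the positive part of `f`; its integral is `∫ |f| / 2` because `∫ f = 0`.
lemma setIntegral_le_half_integral_abs (hf : Integrable f μ) (h0 : ∫ x, f x ∂μ = 0)
    {A : Set Ω} (hA : MeasurableSet A) : ∫ x in A, f x ∂μ ≤ (∫ x, |f x| ∂μ) / 2 := by
  have hpos : Integrable (fun x => (|f x| + f x) / 2) μ := (hf.abs.add hf).div_const 2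
  calc ∫ x in A, f x ∂μ ≤ ∫ x in A, (|f x| + f x) / 2 ∂μ :=
        setIntegral_mono_on hf.integrableOn hpos.integrableOn hA
          fun x _ => by linarith [le_abs_self (f x)]
    _ ≤ ∫ x, (|f x| + f x) / 2 ∂μ :=
        setIntegral_le_integral hpos (ae_of_all _ fun x => by
          simp only [Pi.zero_apply]; linarith [neg_abs_le (f x)])
    _ = (∫ x, |f x| ∂μ) / 2 := by rw [integral_div, integral_add hf.abs hf, h0, add_zero]

lemma abs_setIntegral_le_half_integral_abs (hf : Integrable f μ) (h0 : ∫ x, f x ∂μ = 0)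
    {A : Set Ω} (hA : MeasurableSet A) : |∫ x in A, f x ∂μ| ≤ (∫ x, |f x| ∂μ) / 2 := by
  have hneg := setIntegral_le_half_integral_abs (f := fun x => -f x) hf.neg
    (by rw [integral_neg, h0, neg_zero]) hA
  simp only [abs_neg, integral_neg] at hneg
  exact abs_le.2 ⟨by linarith, setIntegral_le_half_integral_abs hf h0 hA⟩

lemma integral_abs_eq_two_mul_setIntegral (hf : Integrable f μ) (h0 : ∫ x, f x ∂μ = 0)
    {S : Set Ω} (hS : MeasurableSet S) (hpos : ∀ x ∈ S, 0 ≤ f x) (hneg : ∀ x ∉ S, f x ≤ 0) :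
    ∫ x, |f x| ∂μ = 2 * ∫ x in S, f x ∂μ := by
  have hsplit := integral_add_compl hS hf
  rw [← integral_add_compl hS hf.abs,
    setIntegral_congr_fun hS fun x hx => abs_of_nonneg (hpos x hx),
    setIntegral_congr_fun hS.compl fun x hx => abs_of_nonpos (hneg x hx), integral_neg]
  linarith

lemma toReal_withDensity_ofReal_apply {p : Ω → ℝ} (hp : Integrable p μ) (hp0 : 0 ≤ p)
    {A : Set Ω} (hA : MeasurableSet A) :
    ((μ.withDensity fun x => ENNReal.ofReal (p x)) A).toReal = ∫ x in A, p x ∂μ := by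
  rw [withDensity_apply _ hA, ← ofReal_integral_eq_lintegral_ofReal hp.integrableOn
    (ae_of_all _ hp0), ENNReal.toReal_ofReal (setIntegral_nonneg hA fun x _ => hp0 x)]

lemma tvDist_withDensity_le {p q : Ω → ℝ} (hp : Integrable p μ) (hq : Integrable q μ)
    (hp0 : 0 ≤ p) (hq0 : 0 ≤ q) (hpq : ∫ x, p x ∂μ = ∫ x, q x ∂μ) :
    tvDist (μ.withDensity fun x => ENNReal.ofReal (p x))
      (μ.withDensity fun x => ENNReal.ofReal (q x)) ≤ (∫ x, |p x - q x| ∂μ) / 2 := by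
  have h0 : ∫ x, p x - q x ∂μ = 0 := by rw [integral_sub hp hq, hpq, sub_self]
  refine Real.iSup_le (fun A => Real.iSup_le (fun hA => ?_) ?_) ?_
  · rw [toReal_withDensity_ofReal_apply hp hp0 hA, toReal_withDensity_ofReal_apply hq hq0 hA,
      ← integral_sub hp.integrableOn hq.integrableOn]
    exact abs_setIntegral_le_half_integral_abs (hp.sub hq) h0 hA
  all_goals exact div_nonneg (integral_nonneg fun x => abs_nonneg _) zero_le_two

end SignedDensity

section ProductDensity

variable {ι : Type*} [Fintype ι] {E : ι → Type*} {mE : ∀ i, MeasurableSpace (E i)}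
  {μ : (i : ι) → Measure (E i)}

lemma prod_update_apply [DecidableEq ι] (h : (i : ι) → E i → ℝ) (i : ι) (u : E i → ℝ)
    (x : (i : ι) → E i) :
    ∏ j, Function.update h i u j (x j) = u (x i) * ∏ j ∈ univ \ {i}, h j (x j) := by
  simp_rw [Function.apply_update (fun j (φ : E j → ℝ) => φ (x j))]
  exact prod_update_of_mem (mem_univ i) _ _

lemma integral_abs_prod_update_sub_prod_update [DecidableEq ι] [∀ i, SigmaFinite (μ i)]
    {h : (i : ι) → E i → ℝ} {i : ι} (hh0 : ∀ j ≠ i, 0 ≤ h j)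
    (hh1 : ∀ j ≠ i, ∫ t, h j t ∂μ j = 1) (u v : E i → ℝ) :
    ∫ x, |∏ j, Function.update h i u j (x j) - ∏ j, Function.update h i v j (x j)| ∂Measure.pi μ
      = ∫ t, |u t - v t| ∂μ i := by
  have hfactor : ∀ x : (i : ι) → E i,
      |∏ j, Function.update h i u j (x j) - ∏ j, Function.update h i v j (x j)|
        = ∏ j, Function.update h i (fun t => |u t - v t|) j (x j) := by
    intro x
    have hrest : 0 ≤ ∏ j ∈ univ \ {i}, h j (x j) :=
      prod_nonneg fun j hj => hh0 j (by simpa using hj) _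
    rw [prod_update_apply, prod_update_apply, prod_update_apply, ← sub_mul, abs_mul,
      abs_of_nonneg hrest]
  simp_rw [hfactor]
  rw [integral_fintype_prod_eq_prod,
    show ∏ j, ∫ t, Function.update h i (fun t => |u t - v t|) j t ∂μ j
      = ∏ j, Function.update (fun j => ∫ t, h j t ∂μ j) i (∫ t, |u t - v t| ∂μ i) j by
      simp_rw [Function.apply_update (fun j (φ : E j → ℝ) => ∫ t, φ t ∂μ j)],
    prod_update_of_mem (mem_univ i), prod_eq_one fun j hj => hh1 j (by simpa using hj), mul_one]

lemma integral_abs_prod_sub_prod_le [∀ i, SigmaFinite (μ i)] {f g : (i : ι) → E i → ℝ}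
    (hf : ∀ i, Integrable (f i) (μ i)) (hg : ∀ i, Integrable (g i) (μ i))
    (hf0 : ∀ i, 0 ≤ f i) (hg0 : ∀ i, 0 ≤ g i)
    (hf1 : ∀ i, ∫ t, f i t ∂μ i = 1) (hg1 : ∀ i, ∫ t, g i t ∂μ i = 1) :
    ∫ x, |∏ i, f i (x i) - ∏ i, g i (x i)| ∂Measure.pi μ ≤ ∑ i, ∫ t, |f i t - g i t| ∂μ i := by
  classical
  have hint : ∀ s : Finset ι,
      Integrable (fun x : (i : ι) → E i => ∏ i, s.piecewise f g i (x i)) (Measure.pi μ) :=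
    fun s => Integrable.fintype_prod_dep fun i =>
      s.piecewise_cases f g (fun φ => Integrable φ (μ i)) (hf i) (hg i)
  -- Telescope along the hybrids that use `f` on `s` and `g` off `s`.
  suffices key : ∀ s : Finset ι, ∫ x, |∏ i, s.piecewise f g i (x i) - ∏ i, g i (x i)| ∂Measure.pi μ
      ≤ ∑ i ∈ s, ∫ t, |f i t - g i t| ∂μ i by
    simpa using key univ
  intro s
  induction s using Finset.induction_on with
  | empty => simp
  | insert i s hi ih =>
    have hg_eq : Function.update (s.piecewise f g) i (g i) = s.piecewise f g := by
      rw [Function.update_eq_self_iff, Finset.piecewise_eq_of_notMem _ _ _ hi]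
    have hstep := integral_abs_prod_update_sub_prod_update (μ := μ) (i := i) (h := s.piecewise f g)
      (fun j _ => s.piecewise_cases f g (fun φ => 0 ≤ φ) (hf0 j) (hg0 j))
      (fun j _ => s.piecewise_cases f g (fun φ => ∫ t, φ t ∂μ j = 1) (hf1 j) (hg1 j)) (f i) (g i)
    rw [hg_eq, ← Finset.piecewise_insert] at hstep
    have hG : Integrable (fun x : (i : ι) → E i => ∏ j, g j (x j)) (Measure.pi μ) :=
      Integrable.fintype_prod_dep hg
    have h1 := ((hint (insert i s)).sub (hint s)).abs
    have h2 := ((hint s).sub hG).abs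
    calc ∫ x, |∏ j, (insert i s).piecewise f g j (x j) - ∏ j, g j (x j)| ∂Measure.pi μ
        ≤ ∫ x, (|∏ j, (insert i s).piecewise f g j (x j) - ∏ j, s.piecewise f g j (x j)|
            + |∏ j, s.piecewise f g j (x j) - ∏ j, g j (x j)|) ∂Measure.pi μ :=
          integral_mono ((hint _).sub hG).abs (h1.add h2) fun x => abs_sub_le _ _ _
      _ = ∫ t, |f i t - g i t| ∂μ i
            + ∫ x, |∏ j, s.piecewise f g j (x j) - ∏ j, g j (x j)| ∂Measure.pi μ := by
          rw [← hstep]; exact integral_add h1 h2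
      _ ≤ ∑ j ∈ insert i s, ∫ t, |f j t - g j t| ∂μ j := by
          rw [sum_insert hi]; gcongr

end ProductDensity

lemma setIntegral_Ioi_comp_sub_right {E : Type*} [NormedAddCommGroup E] [NormedSpace ℝ E]
    (f : ℝ → E) (a c : ℝ) : ∫ x in Ioi c, f (x - a) = ∫ x in Ioi (c - a), f x := by
  have := (measurePreserving_sub_right volume a).setIntegral_preimage_emb
    (measurableEmbedding_subRight a) f (Ioi (c - a))
  rwa [preimage_sub_const_Ioi, sub_add_cancel] at this

namespace ProbabilityTheory

lemma gaussianPDFReal_le_inv_sqrt (a : ℝ) (v : ℝ≥0) (x : ℝ) :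
    gaussianPDFReal a v x ≤ (√(2 * π * v))⁻¹ :=
  mul_le_of_le_one_right (by positivity) <| exp_le_one_iff.2 <|
    div_nonpos_of_nonpos_of_nonneg (neg_nonpos.2 (sq_nonneg _)) (by positivity)

lemma gaussianPDFReal_le_of_sq_le {v : ℝ≥0} {a b x : ℝ} (h : (x - a) ^ 2 ≤ (x - b) ^ 2) :
    gaussianPDFReal b v x ≤ gaussianPDFReal a v x :=
  mul_le_mul_of_nonneg_left
    (exp_le_exp.2 (div_le_div_of_nonneg_right (neg_le_neg h) (by positivity))) (by positivity)

lemma integral_abs_gaussianPDFReal_sub_of_nonneg {v : ℝ≥0} (hv : v ≠ 0) {a : ℝ} (ha : 0 ≤ a) :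
    ∫ x, |gaussianPDFReal a v x - gaussianPDFReal 0 v x| ≤ 2 * a / √(2 * π * v) := by
  have hint : Integrable fun x => gaussianPDFReal a v x - gaussianPDFReal 0 v x :=
    (integrable_gaussianPDFReal a v).sub (integrable_gaussianPDFReal 0 v)
  have h0 : ∫ x, gaussianPDFReal a v x - gaussianPDFReal 0 v x = 0 := by
    rw [integral_sub (integrable_gaussianPDFReal a v) (integrable_gaussianPDFReal 0 v),
      integral_gaussianPDFReal_eq_one a hv, integral_gaussianPDFReal_eq_one 0 hv, sub_self]
  -- The two densities cross at the midpoint `a / 2`.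
  have hcross := integral_abs_eq_two_mul_setIntegral hint h0 (measurableSet_Ioi (a := a / 2))
    (fun x (hx : a / 2 < x) => sub_nonneg.2 (gaussianPDFReal_le_of_sq_le (by nlinarith)))
    (fun x hx => sub_nonpos.2 (gaussianPDFReal_le_of_sq_le (by nlinarith [Set.notMem_Ioi.1 hx])))
  have hshift : ∫ x in Ioi (a / 2), gaussianPDFReal a v x
      = ∫ x in Ioi (-(a / 2)), gaussianPDFReal 0 v x := by
    rw [show -(a / 2) = a / 2 - a by ring, ← setIntegral_Ioi_comp_sub_right]
    simp_rw [gaussianPDFReal_sub, zero_add]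
  calc ∫ x, |gaussianPDFReal a v x - gaussianPDFReal 0 v x|
      = 2 * ∫ x in -(a / 2)..a / 2, gaussianPDFReal 0 v x := by
        rw [hcross, integral_sub (integrable_gaussianPDFReal a v).integrableOn
          (integrable_gaussianPDFReal 0 v).integrableOn, hshift,
          intervalIntegral.integral_Ioi_sub_Ioi (integrable_gaussianPDFReal 0 v).integrableOn
            (by linarith)]
    _ ≤ 2 * ((√(2 * π * v))⁻¹ * |a / 2 - -(a / 2)|) := by
        gcongr
        refine (Real.le_norm_self _).trans (intervalIntegral.norm_integral_le_of_norm_le_const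
          fun x _ => ?_)
        rw [Real.norm_of_nonneg (gaussianPDFReal_nonneg 0 v x)]
        exact gaussianPDFReal_le_inv_sqrt 0 v x
    _ = 2 * a / √(2 * π * v) := by
        rw [show a / 2 - -(a / 2) = a by ring, abs_of_nonneg ha]; ring

lemma integral_abs_gaussianPDFReal_sub_le {v : ℝ≥0} (hv : v ≠ 0) (a : ℝ) :
    ∫ x, |gaussianPDFReal a v x - gaussianPDFReal 0 v x| ≤ 2 * |a| / √(2 * π * v) := by
  rcases le_total 0 a with ha | ha
  · rw [abs_of_nonneg ha]
    exact integral_abs_gaussianPDFReal_sub_of_nonneg hv ha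
  · have hreflect : ∫ x, |gaussianPDFReal a v x - gaussianPDFReal 0 v x|
        = ∫ x, |gaussianPDFReal (-a) v x - gaussianPDFReal 0 v x| := by
      rw [← integral_add_right_eq_self _ a]
      simp_rw [gaussianPDFReal_add, sub_self, zero_sub, abs_sub_comm]
    rw [hreflect, abs_of_nonpos ha]
    exact integral_abs_gaussianPDFReal_sub_of_nonneg hv (neg_nonneg.2 ha)

end ProbabilityTheory

lemma EuclideanSpace.integral_comp_ofLp {ι E : Type*} [Fintype ι] [NormedAddCommGroup E]
    [NormedSpace ℝ E] (g : (ι → ℝ) → E) : ∫ x : EuclideanSpace ℝ ι, g x.ofLp = ∫ y, g y :=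
  (EuclideanSpace.volume_preserving_symm_measurableEquiv_toLp ι).integral_comp' g

section StandardGaussian

variable {m : ℕ}

lemma gaussianDensity_one_eq_prod (ν x : EuclideanSpace ℝ (Fin m)) :
    gaussianDensity ν 1 x = ∏ i, gaussianPDFReal (ν i) 1 (x i) := by
  have hsqrt : √((2 * π) ^ m) = √(2 * π) ^ m := by
    rw [sqrt_eq_iff_eq_sq (by positivity) (by positivity), ← pow_mul, mul_comm m 2, pow_mul,
      sq_sqrt (by positivity)]
  simp only [gaussianDensity, gaussianPDFReal, det_one, inv_one, one_mulVec, mul_one,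
    NNReal.coe_one, hsqrt, dotProduct, ← sq, prod_mul_distrib, prod_const, card_univ,
    Fintype.card_fin, inv_pow, ← exp_sum, mul_sum]
  congr 2
  exact sum_congr rfl fun i _ => by ring

lemma integrable_gaussianDensity_one (ν : EuclideanSpace ℝ (Fin m)) :
    Integrable (gaussianDensity ν 1) := by
  simp_rw [funext (gaussianDensity_one_eq_prod ν)]
  exact (EuclideanSpace.volume_preserving_symm_measurableEquiv_toLp (Fin m)).integrable_comp_emb
    (MeasurableEquiv.measurableEmbedding _) |>.2
      (Integrable.fintype_prod fun i => integrable_gaussianPDFReal (ν i) 1)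

lemma integral_gaussianDensity_one (ν : EuclideanSpace ℝ (Fin m)) :
    ∫ x, gaussianDensity ν 1 x = 1 := by
  simp_rw [gaussianDensity_one_eq_prod, EuclideanSpace.integral_comp_ofLp
    (fun y => ∏ i, gaussianPDFReal (ν i) 1 (y i)), integral_fintype_prod_volume_eq_prod,
    integral_gaussianPDFReal_eq_one _ one_ne_zero, prod_const_one]

lemma gaussianDensity_one_nonneg (ν : EuclideanSpace ℝ (Fin m)) : 0 ≤ gaussianDensity ν 1 :=
  fun x => by
    rw [gaussianDensity_one_eq_prod]
    exact prod_nonneg fun i _ => gaussianPDFReal_nonneg _ _ _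

lemma integral_abs_gaussianDensity_one_sub_le (μ : EuclideanSpace ℝ (Fin m)) :
    ∫ x, |gaussianDensity μ 1 x - gaussianDensity 0 1 x| ≤ ∑ i, 2 * |μ i| / √(2 * π) := by
  simp_rw [gaussianDensity_one_eq_prod, EuclideanSpace.integral_comp_ofLp (fun y =>
    |∏ i, gaussianPDFReal (μ i) 1 (y i)
      - ∏ i, gaussianPDFReal ((0 : EuclideanSpace ℝ (Fin m)) i) 1 (y i)|)]
  refine (integral_abs_prod_sub_prod_le (μ := fun _ => volume)
    (fun i => integrable_gaussianPDFReal _ 1) (fun i => integrable_gaussianPDFReal _ 1)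
    (fun i => gaussianPDFReal_nonneg _ 1) (fun i => gaussianPDFReal_nonneg _ 1)
    (fun i => integral_gaussianPDFReal_eq_one _ one_ne_zero)
    (fun i => integral_gaussianPDFReal_eq_one _ one_ne_zero)).trans (sum_le_sum fun i _ => ?_)
  simpa using integral_abs_gaussianPDFReal_sub_le one_ne_zero (μ i)

end StandardGaussian

theorem stmt_4 {m : ℕ} (μ : EuclideanSpace ℝ (Fin m)) :
    tvDist (gaussian μ 1) (gaussian 0 1) ≤
      (∑ i : Fin m, |μ i|) / Real.sqrt (2 * Real.pi) := by
  calc tvDist (gaussian μ 1) (gaussian 0 1)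
      ≤ (∫ x, |gaussianDensity μ 1 x - gaussianDensity 0 1 x|) / 2 :=
        tvDist_withDensity_le (integrable_gaussianDensity_one μ) (integrable_gaussianDensity_one 0)
          (gaussianDensity_one_nonneg μ) (gaussianDensity_one_nonneg 0)
          (by rw [integral_gaussianDensity_one, integral_gaussianDensity_one])
    _ ≤ (∑ i, 2 * |μ i| / √(2 * π)) / 2 := by
        gcongr; exact integral_abs_gaussianDensity_one_sub_le μ
    _ = (∑ i : Fin m, |μ i|) / Real.sqrt (2 * Real.pi) := by
        rw [← sum_div, ← mul_sum]; ring
end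

section
/- Let f : ℝ^m → ℝ be integrable (with respect to Lebesgue measure) and nonnegative, and let (μ_ε) be vectors in ℝ^m with ‖μ_ε‖ → ∞ as ε → 0. Then ∫_{ℝ^m} |f(x − μ_ε) − f(x)| dx converges to 2 ∫_{ℝ^m} f(x) dx as ε → 0. -/
open MeasureTheory Matrix Filter

lemma abs_sub_eq (a b : ℝ) : |a - b| = a + b - 2 * min a b := by
  rcases le_total a b with hab | hab
  · rw [abs_of_nonpos (by linarith), min_eq_left hab]; ring
  · rw [abs_of_nonneg (by linarith), min_eq_right hab]; ring

theorem stmt_8 {m : ℕ} (f : EuclideanSpace ℝ (Fin m) → ℝ)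
    (hf : Integrable f volume) (hf0 : ∀ x, 0 ≤ f x)
    (μ : ℝ → EuclideanSpace ℝ (Fin m))
    (h : Tendsto (fun ε => ‖μ ε‖) (nhdsWithin 0 (Set.Ioi 0)) atTop) :
    Tendsto (fun ε => ∫ x, |f (x - μ ε) - f x|)
      (nhdsWithin 0 (Set.Ioi 0)) (nhds (2 * ∫ x, f x)) := by
  set l := nhdsWithin (0 : ℝ) (Set.Ioi 0)
  have hg : ∀ v : EuclideanSpace ℝ (Fin m), Integrable (fun x => f (x - v)) volume :=
    fun v => hf.comp_sub_right v
  have hmin : ∀ v, Integrable (fun x => min (f (x - v)) (f x)) volume := by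
    intro v
    have : (fun x => min (f (x - v)) (f x))
        = fun x => ((f (x - v) + f x) - |f (x - v) - f x|) / 2 := by
      funext x
      have := abs_sub_eq (f (x - v)) (f x)
      field_simp
      linarith
    rw [this]
    exact ((((hg v).add hf).sub ((hg v).sub hf).abs).div_const 2)
  -- key: ∫ min (f (x - μ ε)) (f x) → 0
  have key : Tendsto (fun ε => ∫ x, min (f (x - μ ε) ) (f x)) l (nhds 0) := by
    rw [Metric.tendsto_nhds]
    intro δ hδ
    -- find R with ∫ over complement of closedBall 0 R of f < δ/4
    obtain ⟨R, hR⟩ : ∃ R : ℕ, ∫ x in (Metric.closedBall (0 : EuclideanSpace ℝ (Fin m)) R)ᶜ, f x < δ / 4 := by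
      have hmono : Monotone (fun n : ℕ => Metric.closedBall (0 : EuclideanSpace ℝ (Fin m)) n) :=
        fun a b hab => Metric.closedBall_subset_closedBall (by exact_mod_cast hab)
      have htends := tendsto_setIntegral_of_monotone
        (fun n : ℕ => measurableSet_closedBall) hmono
        (by rw [Metric.iUnion_closedBall_nat]; exact hf.integrableOn)
      rw [Metric.iUnion_closedBall_nat] at htends
      simp only [Measure.restrict_univ] at htends
      have := htends.eventually (eventually_gt_nhds (show (∫ x, f x) - δ/4 < ∫ x, f x by linarith))
      obtain ⟨n, hn⟩ := this.exists
      refine ⟨n, ?_⟩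
      have hsplit : (∫ x in Metric.closedBall (0 : EuclideanSpace ℝ (Fin m)) n, f x)
          + ∫ x in (Metric.closedBall (0 : EuclideanSpace ℝ (Fin m)) n)ᶜ, f x = ∫ x, f x :=
        integral_add_compl measurableSet_closedBall hf
      linarith
    have hev : ∀ᶠ ε in l, 2 * (R : ℝ) < ‖μ ε‖ := h.eventually_gt_atTop _
    filter_upwards [hev] with ε hε
    set v := μ ε
    set A := Metric.closedBall (0 : EuclideanSpace ℝ (Fin m)) R with hA
    have hAmeas : MeasurableSet A := measurableSet_closedBall
    -- pointwise bound
    have hpt : ∀ x, min (f (x - v)) (f x) ≤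
        Aᶜ.indicator f x + Aᶜ.indicator f (x - v) := by
      intro x
      by_cases hx : x ∈ A
      · have hxv : x - v ∉ A := by
          simp only [hA, Metric.mem_closedBall, dist_zero_right, not_le] at hx ⊢
          have h1 : ‖v‖ - ‖x‖ ≤ ‖v - x‖ := norm_sub_norm_le v x
          rw [norm_sub_rev] at h1
          linarith
        rw [Set.indicator_of_mem (Set.mem_compl hxv) f]
        have : Aᶜ.indicator f x ≥ 0 := Set.indicator_nonneg (fun y _ => hf0 y) x
        have := min_le_left (f (x - v)) (f x)
        linarith
      · rw [Set.indicator_of_mem (Set.mem_compl hx) f]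
        have : Aᶜ.indicator f (x - v) ≥ 0 := Set.indicator_nonneg (fun y _ => hf0 y) _
        have := min_le_right (f (x - v)) (f x)
        linarith
    have hind : Integrable (Aᶜ.indicator f) volume := hf.indicator hAmeas.compl
    have hint : (∫ x, min (f (x - v)) (f x)) ≤
        ∫ x, (Aᶜ.indicator f x + Aᶜ.indicator f (x - v)) := by
      refine integral_mono (hmin v) (hind.add (hind.comp_sub_right v)) hpt
    have htrans : (∫ x, Aᶜ.indicator f (x - v)) = ∫ x, Aᶜ.indicator f x :=
      integral_sub_right_eq_self (Aᶜ.indicator f) v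
    rw [integral_add hind (hind.comp_sub_right v), htrans] at hint
    have hcompl : (∫ x, Aᶜ.indicator f x) = ∫ x in Aᶜ, f x :=
      integral_indicator hAmeas.compl
    have hnn : 0 ≤ ∫ x, min (f (x - v)) (f x) :=
      integral_nonneg fun x => le_min (hf0 _) (hf0 _)
    rw [Real.dist_eq, sub_zero, abs_of_nonneg hnn]
    rw [hcompl] at hint
    linarith
  have heq : ∀ ε, (∫ x, |f (x - μ ε) - f x|)
      = 2 * (∫ x, f x) - 2 * ∫ x, min (f (x - μ ε)) (f x) := by
    intro ε
    have : (∫ x, |f (x - μ ε) - f x|)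
        = ∫ x, (f (x - μ ε) + f x - 2 * min (f (x - μ ε)) (f x)) := by
      congr 1; funext x; exact abs_sub_eq _ _
    have hA : Integrable (fun x => f (x - μ ε) + f x) volume := (hg _).add hf
    have hB : Integrable (fun x => 2 * min (f (x - μ ε)) (f x)) volume :=
      (hmin _).const_mul 2
    rw [this, integral_sub hA hB, integral_add (hg _) hf, integral_const_mul 2 _,
      integral_sub_right_eq_self f (μ ε)]
    ring
  simp only [heq]
  have : Tendsto (fun ε => 2 * (∫ x, f x) - 2 * ∫ x, min (f (x - μ ε)) (f x)) l
      (nhds (2 * (∫ x, f x) - 2 * 0)) :=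
    tendsto_const_nhds.sub (key.const_mul 2)
  simpa using this
end

section
/- Let μ and ν be probability measures on a measurable space (Ω, F). Then the total variation distance satisfies ‖μ − ν‖² ≤ 2 H(μ | ν), where H(μ | ν) is the Kullback–Leibler divergence of μ with respect to ν (set to +∞ if μ is not absolutely continuous with respect to ν). -/
/-!
Write `f = dμ/dν`. Since `∫ (f - 1) dν = 0`, every `μ(A) - ν(A) = ∫_A (f - 1) dν` is bounded by
`½ ∫ |f - 1| dν`. The elementary inequality `(x - 1)² ≤ 2 (x + 1) (x log x + 1 - x)` and the
Cauchy–Schwarz inequality give `(∫ |f - 1| dν)² ≤ (∫ 2 (f + 1) dν) · H(μ|ν) = 4 H(μ|ν)`,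
so in fact `‖μ - ν‖² ≤ H(μ|ν)`.
-/

open MeasureTheory
open scoped ENNReal Classical

/-- Kullback–Leibler divergence `H(μ|ν) = ∫ f ln f dν` with `f = dμ/dν` when `μ ≪ ν`
(and the integrand is integrable), and `+∞` otherwise. -/

noncomputable def klDiv {Ω : Type*} [MeasurableSpace Ω] (μ ν : Measure Ω) : ℝ≥0∞ :=
  if μ ≪ ν ∧ Integrable (fun x => (μ.rnDeriv ν x).toReal * Real.log (μ.rnDeriv ν x).toReal) ν
  then ENNReal.ofReal
      (∫ x, (μ.rnDeriv ν x).toReal * Real.log (μ.rnDeriv ν x).toReal ∂ν)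
  else ⊤

namespace InformationTheory

open Real Set

lemma sq_sub_one_le_two_mul_klFun_of_le_one {x : ℝ} (hx₀ : 0 ≤ x) (hx₁ : x ≤ 1) :
    (x - 1) ^ 2 ≤ 2 * klFun x := by
  have hanti : AntitoneOn (fun y => 2 * klFun y - (y - 1) ^ 2) (Icc 0 1) := by
    refine antitoneOn_of_hasDerivWithinAt_nonpos (convex_Icc 0 1) (by fun_prop)
      (f' := fun y => 2 * log y - 2 * (y - 1)) (fun y hy => ?_) (fun y hy => ?_)
    · rw [interior_Icc] at hy
      refine HasDerivAt.hasDerivWithinAt ?_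
      exact (((hasDerivAt_klFun hy.1.ne').const_mul 2).sub
        (((hasDerivAt_id' y).sub_const 1).pow 2)).congr_deriv (by norm_num)
    · rw [interior_Icc] at hy
      linarith [log_le_sub_one_of_pos hy.1]
  have := hanti ⟨hx₀, hx₁⟩ ⟨zero_le_one, le_rfl⟩ hx₁
  simp only [klFun_one] at this
  linarith

lemma sq_sub_one_le_two_mul_mul_klFun_of_one_le {x : ℝ} (hx : 1 ≤ x) :
    (x - 1) ^ 2 ≤ 2 * x * klFun x := by
  have hmono : MonotoneOn (fun y => 2 * y * klFun y - (y - 1) ^ 2) (Ici 1) := by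
    refine monotoneOn_of_hasDerivWithinAt_nonneg (convex_Ici 1) (by fun_prop)
      (f' := fun y => 4 * klFun y) (fun y hy => ?_) (fun y hy => ?_)
    · rw [interior_Ici] at hy
      refine HasDerivAt.hasDerivWithinAt ?_
      exact ((((hasDerivAt_id' y).const_mul 2).mul
        (hasDerivAt_klFun (zero_lt_one.trans hy).ne')).sub
        (((hasDerivAt_id' y).sub_const 1).pow 2)).congr_deriv (by norm_num [klFun]; ring)
    · rw [interior_Ici] at hy
      linarith [klFun_nonneg (zero_le_one.trans hy.le)]
  have := hmono (le_refl (1 : ℝ)) hx hx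
  simp only [klFun_one] at this
  linarith

lemma sq_sub_one_le_two_mul_add_one_mul_klFun {x : ℝ} (hx : 0 ≤ x) :
    (x - 1) ^ 2 ≤ 2 * (x + 1) * klFun x := by
  have hk := klFun_nonneg hx
  rcases le_total x 1 with h | h
  · nlinarith [sq_sub_one_le_two_mul_klFun_of_le_one hx h]
  · nlinarith [sq_sub_one_le_two_mul_mul_klFun_of_one_le h]

end InformationTheory

open Real in
lemma sq_integral_abs_le_integral_mul_integral {α : Type*} [MeasurableSpace α] {μ : Measure α}
    {u w k : α → ℝ} (hw : 0 ≤ w) (hk : 0 ≤ k) (hw_int : Integrable w μ) (hk_int : Integrable k μ)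
    (h : ∀ x, u x ^ 2 ≤ w x * k x) :
    (∫ x, |u x| ∂μ) ^ 2 ≤ (∫ x, w x ∂μ) * ∫ x, k x ∂μ := by
  have memLp_sqrt {v : α → ℝ} (hv : 0 ≤ v) (hv_int : Integrable v μ) :
      MemLp (fun x => √(v x)) 2 μ := by
    rw [memLp_two_iff_integrable_sq
      (continuous_sqrt.comp_aestronglyMeasurable hv_int.aestronglyMeasurable)]
    simpa [sq_sqrt (hv _)] using hv_int
  have integral_rpow_sqrt {v : α → ℝ} (hv : 0 ≤ v) :
      (∫ x, √(v x) ^ (2 : ℝ) ∂μ) ^ (1 / 2 : ℝ) = √(∫ x, v x ∂μ) := by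
    simp only [rpow_two, sq_sqrt (hv _)]
    exact (sqrt_eq_rpow _).symm
  have cauchy_schwarz : ∫ x, √(w x) * √(k x) ∂μ ≤ √(∫ x, w x ∂μ) * √(∫ x, k x ∂μ) := by
    rw [← integral_rpow_sqrt hw, ← integral_rpow_sqrt hk]
    exact integral_mul_le_Lp_mul_Lq_of_nonneg HolderConjugate.two_two
      (ae_of_all μ fun x => sqrt_nonneg (w x)) (ae_of_all μ fun x => sqrt_nonneg (k x))
      (by simpa using memLp_sqrt hw hw_int) (by simpa using memLp_sqrt hk hk_int)
  have h_abs : ∫ x, |u x| ∂μ ≤ ∫ x, √(w x) * √(k x) ∂μ := by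
    refine integral_mono_of_nonneg (ae_of_all μ fun x => abs_nonneg _)
      ((memLp_sqrt hw hw_int).integrable_mul (memLp_sqrt hk hk_int)) (ae_of_all μ fun x => ?_)
    exact (abs_le_sqrt (h x)).trans_eq (sqrt_mul (hw x) _)
  calc (∫ x, |u x| ∂μ) ^ 2 ≤ (√(∫ x, w x ∂μ) * √(∫ x, k x ∂μ)) ^ 2 :=
        pow_le_pow_left₀ (integral_nonneg fun x => abs_nonneg _) (h_abs.trans cauchy_schwarz) 2
    _ = (∫ x, w x ∂μ) * ∫ x, k x ∂μ := by
        rw [mul_pow, sq_sqrt (integral_nonneg hw), sq_sqrt (integral_nonneg hk)]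

lemma abs_setIntegral_le_half_integral_abs_s14 {α : Type*} [MeasurableSpace α] {μ : Measure α}
    {g : α → ℝ} {s : Set α} (hg : Integrable g μ) (hg₀ : ∫ x, g x ∂μ = 0)
    (hs : MeasurableSet s) :
    |∫ x in s, g x ∂μ| ≤ (∫ x, |g x| ∂μ) / 2 := by
  have h_compl : ∫ x in sᶜ, g x ∂μ = -∫ x in s, g x ∂μ := by
    linarith [integral_add_compl hs hg]
  have h_split := integral_add_compl hs hg.abs
  have h_s : |∫ x in s, g x ∂μ| ≤ ∫ x in s, |g x| ∂μ := abs_integral_le_integral_abs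
  have h_sc : |∫ x in sᶜ, g x ∂μ| ≤ ∫ x in sᶜ, |g x| ∂μ := abs_integral_le_integral_abs
  rw [h_compl, abs_neg] at h_sc
  linarith

lemma abs_measureReal_sub_le_half_integral_abs_rnDeriv_sub_one {Ω : Type*} [MeasurableSpace Ω]
    {μ ν : Measure Ω} [IsProbabilityMeasure μ] [IsProbabilityMeasure ν] (hμν : μ ≪ ν) {s : Set Ω}
    (hs : MeasurableSet s) :
    |μ.real s - ν.real s| ≤ (∫ x, |(μ.rnDeriv ν x).toReal - 1| ∂ν) / 2 := by
  have hf : Integrable (fun x => (μ.rnDeriv ν x).toReal) ν := Measure.integrable_toReal_rnDeriv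
  have h_sub : μ.real s - ν.real s = ∫ x in s, ((μ.rnDeriv ν x).toReal - 1) ∂ν := by
    rw [integral_sub hf.integrableOn (integrable_const 1), Measure.setIntegral_toReal_rnDeriv hμν,
      setIntegral_const, smul_eq_mul, mul_one]
  rw [h_sub]
  refine abs_setIntegral_le_half_integral_abs_s14 (hf.sub (integrable_const 1)) ?_ hs
  rw [integral_sub hf (integrable_const 1), Measure.integral_toReal_rnDeriv hμν]
  simp

lemma tvDist_le_half_integral_abs_rnDeriv_sub_one {Ω : Type*} [MeasurableSpace Ω]
    {μ ν : Measure Ω} [IsProbabilityMeasure μ] [IsProbabilityMeasure ν] (hμν : μ ≪ ν) :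
    tvDist μ ν ≤ (∫ x, |(μ.rnDeriv ν x).toReal - 1| ∂ν) / 2 := by
  have h_nonneg : 0 ≤ (∫ x, |(μ.rnDeriv ν x).toReal - 1| ∂ν) / 2 := by positivity
  refine Real.iSup_le (fun s => Real.iSup_le (fun hs => ?_) h_nonneg) h_nonneg
  exact abs_measureReal_sub_le_half_integral_abs_rnDeriv_sub_one hμν hs

lemma tvDist_nonneg {Ω : Type*} [MeasurableSpace Ω] (μ ν : Measure Ω) : 0 ≤ tvDist μ ν :=
  Real.iSup_nonneg fun _ => Real.iSup_nonneg fun _ => abs_nonneg _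

lemma klDiv_eq_informationTheory_klDiv {Ω : Type*} [MeasurableSpace Ω] (μ ν : Measure Ω)
    [IsProbabilityMeasure μ] [IsProbabilityMeasure ν] :
    klDiv μ ν = InformationTheory.klDiv μ ν := by
  by_cases hμν : μ ≪ ν
  · rw [klDiv, InformationTheory.klDiv_eq_integral_klFun, integrable_rnDeriv_mul_log_iff hμν]
    refine if_ctx_congr Iff.rfl (fun h => ?_) fun _ => rfl
    rw [InformationTheory.integral_klFun_rnDeriv hμν h.2, ← integral_rnDeriv_smul hμν]
    simp [llr]
  · simp [klDiv, hμν]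

section

open InformationTheory (klFun klFun_nonneg sq_sub_one_le_two_mul_add_one_mul_klFun
  klDiv_eq_top_iff klDiv_ne_top toReal_klDiv_eq_integral_klFun integrable_klFun_rnDeriv_iff)

lemma sq_integral_abs_rnDeriv_sub_one_le {Ω : Type*} [MeasurableSpace Ω] {μ ν : Measure Ω}
    [IsProbabilityMeasure μ] [IsProbabilityMeasure ν] (hμν : μ ≪ ν)
    (h_int : Integrable (fun x => klFun (μ.rnDeriv ν x).toReal) ν) :
    (∫ x, |(μ.rnDeriv ν x).toReal - 1| ∂ν) ^ 2
      ≤ 4 * ∫ x, klFun (μ.rnDeriv ν x).toReal ∂ν := by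
  have hf : Integrable (fun x => (μ.rnDeriv ν x).toReal) ν := Measure.integrable_toReal_rnDeriv
  calc (∫ x, |(μ.rnDeriv ν x).toReal - 1| ∂ν) ^ 2
      ≤ (∫ x, 2 * ((μ.rnDeriv ν x).toReal + 1) ∂ν) *
          ∫ x, klFun (μ.rnDeriv ν x).toReal ∂ν :=
        sq_integral_abs_le_integral_mul_integral (fun x => by positivity)
          (fun x => klFun_nonneg ENNReal.toReal_nonneg)
          ((hf.add (integrable_const 1)).const_mul 2) h_int
          (fun x => sq_sub_one_le_two_mul_add_one_mul_klFun ENNReal.toReal_nonneg)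
    _ = 4 * ∫ x, klFun (μ.rnDeriv ν x).toReal ∂ν := by
        rw [integral_const_mul, integral_add hf (integrable_const 1),
          Measure.integral_toReal_rnDeriv hμν]
        norm_num

lemma ofReal_sq_tvDist_le_klDiv {Ω : Type*} [MeasurableSpace Ω] (μ ν : Measure Ω)
    [IsProbabilityMeasure μ] [IsProbabilityMeasure ν] :
    ENNReal.ofReal (tvDist μ ν ^ 2) ≤ InformationTheory.klDiv μ ν := by
  by_cases h : μ ≪ ν ∧ Integrable (llr μ ν) μ
  swap
  · rw [klDiv_eq_top_iff.2 fun hμν => not_and.1 h hμν]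
    exact le_top
  obtain ⟨hμν, h_int⟩ := h
  rw [← ENNReal.ofReal_toReal (klDiv_ne_top hμν h_int), toReal_klDiv_eq_integral_klFun hμν]
  refine ENNReal.ofReal_le_ofReal ?_
  have h_sq := sq_integral_abs_rnDeriv_sub_one_le hμν ((integrable_klFun_rnDeriv_iff hμν).2 h_int)
  calc tvDist μ ν ^ 2 ≤ ((∫ x, |(μ.rnDeriv ν x).toReal - 1| ∂ν) / 2) ^ 2 :=
        pow_le_pow_left₀ (tvDist_nonneg μ ν) (tvDist_le_half_integral_abs_rnDeriv_sub_one hμν) 2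
    _ ≤ ∫ x, klFun (μ.rnDeriv ν x).toReal ∂ν := by
        rw [div_pow]
        linarith

end

/-- Pinsker's inequality: `‖μ - ν‖² ≤ 2 H(μ|ν)`. -/
theorem stmt_14 {Ω : Type*} [MeasurableSpace Ω] (μ ν : Measure Ω)
    [IsProbabilityMeasure μ] [IsProbabilityMeasure ν] :
    ENNReal.ofReal (tvDist μ ν ^ 2) ≤ 2 * klDiv μ ν := by
  rw [klDiv_eq_informationTheory_klDiv]
  exact (ofReal_sq_tvDist_le_klDiv μ ν).trans (le_mul_of_one_le_left zero_le one_le_two)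
end
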